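/- Let c = (c_1, c_2, …) be a sequence of non-negative integers with Σ_ℓ ℓ·c_ℓ = n. Sample a uniformly random set partition of the n pairs {2m−1,2m} of id_n into blocks such that exactly c_ℓ blocks have size ℓ for each ℓ. Independently, for each block B of size ℓ ≥ 2, sample a uniformly random perfect matching of the 2ℓ elements covered by B that forms a single cycle of length 2ℓ together with the restriction of id_n to those elements; blocks of size 1 keep their pair from id_n. Let H ∈ M_n be the union over blocks of these matchings. Then H is uniformly distributed on M(c) := {η ∈ M_n : C(η) = c}. -/

import Mathlib

open scoped Classical

noncomputable section

/-- A perfect matching on `2n` objects, encoded as a fixed-point-free involution of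
`Fin n × Bool`; the element `(i, b)` encodes the object `2i+1` (if `b = false`)
or `2i+2` (if `b = true`) of `{1, …, 2n}`. The pairs of the matching are the orbits. -/
abbrev PM (n : ℕ) : Type :=
  {σ : Equiv.Perm (Fin n × Bool) // Function.Involutive ⇑σ ∧ ∀ x, σ x ≠ x}

/-- The identity matching `id_n = {{1,2},…,{2n-1,2n}}`. -/
def idPM (n : ℕ) : PM n :=
  ⟨⟨fun x => (x.1, !x.2), fun x => (x.1, !x.2), fun x => by simp, fun x => by simp⟩,
    fun x => by simp, fun x => by simp [Prod.ext_iff]⟩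

/-- The (simple graph underlying the) multigraph with edge multiset `η ⊎ μ`. -/
def matchGraph {n : ℕ} (η μ : PM n) : SimpleGraph (Fin n × Bool) where
  Adj x y := x ≠ y ∧ (η.1 x = y ∨ μ.1 x = y)
  symm := by
    constructor
    rintro x y ⟨hne, h | h⟩
    · exact ⟨hne.symm, Or.inl (by rw [← h]; exact η.2.1 x)⟩
    · exact ⟨hne.symm, Or.inr (by rw [← h]; exact μ.2.1 x)⟩
  loopless := by constructor; rintro x ⟨hne, -⟩; exact hne rfl

/-- `cycleCount η μ ℓ` is the number of connected components of size `2ℓ`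
of the multigraph `η ⊎ μ`; `cycleCount η (idPM n)` is the cycle structure `C(η)`. -/
def cycleCount {n : ℕ} (η μ : PM n) (ℓ : ℕ) : ℕ :=
  Nat.card {c : (matchGraph η μ).ConnectedComponent // Nat.card c.supp = 2 * ℓ}

/-- Total variation distance, `max_A |μ(A) - ν(A)|`. -/
def TV {Ω : Type*} (μ ν : Ω → ℝ) : ℝ :=
  ⨆ A : Finset Ω, |∑ x ∈ A, μ x - ∑ x ∈ A, ν x|

/-- Pushforward of a (finitely supported) distribution along a map. -/
def push {Ω : Type*} [Fintype Ω] {S : Type*} (f : Ω → S) (μ : Ω → ℝ) : S → ℝ :=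
  fun s => ∑ x ∈ Finset.univ.filter (fun x => f x = s), μ x

/-- The `η`-invariant subsets of size `2k`, i.e. the unions of `k` pairs of `η`. -/
def invSets {n : ℕ} (η : PM n) (k : ℕ) : Finset (Finset (Fin n × Bool)) :=
  Finset.univ.filter fun T => T.card = 2 * k ∧ ∀ x ∈ T, η.1 x ∈ T

/-- `Compat η T η'` : the matching `η'` agrees with `η` outside `T` and matches
the elements of `T` among themselves. -/
def Compat {n : ℕ} (η : PM n) (T : Finset (Fin n × Bool)) (η' : PM n) : Prop :=
  (∀ x, x ∉ T → η'.1 x = η.1 x) ∧ ∀ x ∈ T, η'.1 x ∈ T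

/-- One-step transition kernel of the `k`-PM random walk: choose `k` pairs of `η`
uniformly (i.e. an `η`-invariant set `T` of size `2k`) and rematch the `2k` covered
elements by an independent uniform perfect matching of them. -/
def kernel (n k : ℕ) (η η' : PM n) : ℝ :=
  (∑ T ∈ invSets η k,
      if Compat η T η' then ((Finset.univ.filter fun η'' : PM n => Compat η T η'').card : ℝ)⁻¹
      else 0) / ((invSets η k).card : ℝ)

/-- Law at time `t` of the `k`-PM random walk started at `η₀`. -/
def pmLaw (n k : ℕ) (η₀ : PM n) : ℕ → PM n → ℝ
  | 0 => fun η => if η = η₀ then 1 else 0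
  | t + 1 => fun η => ∑ η' : PM n, pmLaw n k η₀ t η' * kernel n k η' η

/-- The uniform distribution on `PM n`. -/
def unifPM (n : ℕ) : PM n → ℝ := fun _ => (Fintype.card (PM n) : ℝ)⁻¹

/-- `d_n(t)`: worst-case (over the starting matching) total variation distance to
uniformity at time `t` for the `k`-PM random walk. -/
def dTV (n k t : ℕ) : ℝ := ⨆ η₀ : PM n, TV (pmLaw n k η₀ t) (unifPM n)

/-- The swap graph: two matchings are adjacent if one is obtained from the other by
a single swap (rematching two of its pairs differently). -/
def swapGraph (n : ℕ) : SimpleGraph (PM n) where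
  Adj η η' := η ≠ η' ∧ ∃ T : Finset (Fin n × Bool), T.card = 4 ∧
    (∀ x ∈ T, η.1 x ∈ T) ∧ (∀ x ∈ T, η'.1 x ∈ T) ∧ ∀ x, x ∉ T → η.1 x = η'.1 x
  symm := by
    constructor
    rintro η η' ⟨hne, T, hT, h1, h2, h3⟩
    exact ⟨hne.symm, T, hT, h2, h1, fun x hx => (h3 x hx).symm⟩
  loopless := ⟨fun η h => h.1 rfl⟩


/-- `P` is a set partition of the `n` pairs (indexed by `Fin n`) of `id_n` with
exactly `c ℓ` blocks of size `ℓ` for every `ℓ ≥ 1`. -/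
def IsPartitionType (n : ℕ) (c : ℕ → ℕ) (P : Finset (Finset (Fin n))) : Prop :=
  (∀ B ∈ P, B.Nonempty) ∧ (∀ i : Fin n, ∃! B, B ∈ P ∧ i ∈ B) ∧
    ∀ ℓ, 1 ≤ ℓ → (P.filter fun B => B.card = ℓ).card = c ℓ

/-- The `2ℓ` elements covered by a block `B` of `ℓ` pairs of `id_n`. -/
def covered (n : ℕ) (B : Finset (Fin n)) : Finset (Fin n × Bool) :=
  Finset.univ.filter fun x => x.1 ∈ B

/-- `H` is compatible with the partition `P`: for every block `B` of `P`, the covered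
set of `B` is exactly one connected component of the multigraph `H ⊎ id_n`, i.e. `H`
restricted to it forms a single cycle together with the restriction of `id_n`
(for blocks of size 1 this forces `H` to keep the pair from `id_n`). -/
def CompatPH (n : ℕ) (P : Finset (Finset (Fin n))) (H : PM n) : Prop :=
  ∀ B ∈ P, ∃ c : (matchGraph H (idPM n)).ConnectedComponent,
    c.supp = (↑(covered n B) : Set (Fin n × Bool))

/-- The sample space of the sampling procedure: pairs `(P, H)` of a partition of type
`c` together with a compatible matching; the procedure samples uniformly from it
(the partition is uniform of type `c`, and conditionally on `P` the single cycles on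
the blocks are independent and uniform). -/
def sampleSpacePM (n : ℕ) (c : ℕ → ℕ) : Finset (Finset (Finset (Fin n)) × PM n) :=
  Finset.univ.filter fun PH => IsPartitionType n c PH.1 ∧ CompatPH n PH.1 PH.2

/-- `M(c)`: the matchings with cycle structure `c`. -/
def Mc (n : ℕ) (c : ℕ → ℕ) : Finset (PM n) :=
  Finset.univ.filter fun η => ∀ ℓ, 1 ≤ ℓ → cycleCount η (idPM n) ℓ = c ℓ

namespace UniformMatchingAux

open SimpleGraph

variable {n : ℕ}

lemma flip_adj (η : PM n) (x : Fin n × Bool) :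
    (matchGraph η (idPM n)).Adj x (x.1, !x.2) := by
  refine ⟨?_, Or.inr rfl⟩
  simp [Prod.ext_iff]

lemma mk_flip (η : PM n) (i : Fin n) (b : Bool) :
    (matchGraph η (idPM n)).connectedComponentMk (i, b)
      = (matchGraph η (idPM n)).connectedComponentMk (i, false) := by
  cases b
  · rfl
  · exact SimpleGraph.ConnectedComponent.sound (flip_adj η (i, true)).reachable

lemma mem_supp_iff_false (η : PM n) (cc : (matchGraph η (idPM n)).ConnectedComponent)
    (x : Fin n × Bool) : x ∈ cc.supp ↔ (x.1, false) ∈ cc.supp := by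
  obtain ⟨i, b⟩ := x
  simp only [SimpleGraph.ConnectedComponent.mem_supp_iff]
  rw [mk_flip]

lemma mem_covered {B : Finset (Fin n)} {x : Fin n × Bool} :
    x ∈ covered n B ↔ x.1 ∈ B := by simp [covered]

lemma covered_injective {B B' : Finset (Fin n)} (h : covered n B = covered n B') :
    B = B' := by
  ext i
  have := Finset.ext_iff.mp h (i, false)
  simpa [mem_covered] using this

lemma covered_card (B : Finset (Fin n)) : (covered n B).card = 2 * B.card := by
  have : covered n B = B ×ˢ (Finset.univ : Finset Bool) := by
    ext x; simp [covered]
  rw [this, Finset.card_product]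
  rw [Finset.card_univ, Fintype.card_bool]
  omega

/-- The block of pairs corresponding to a connected component. -/
def blockOf (η : PM n) (cc : (matchGraph η (idPM n)).ConnectedComponent) : Finset (Fin n) :=
  Finset.univ.filter fun i => (i, false) ∈ cc.supp

lemma supp_eq_covered (η : PM n) (cc : (matchGraph η (idPM n)).ConnectedComponent) :
    cc.supp = ↑(covered n (blockOf η cc)) := by
  ext x
  rw [mem_supp_iff_false η cc x]
  simp [mem_covered, blockOf]

lemma eq_blockOf {η : PM n} {cc : (matchGraph η (idPM n)).ConnectedComponent}
    {B : Finset (Fin n)} (h : cc.supp = ↑(covered n B)) : B = blockOf η cc := by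
  apply covered_injective
  have h2 := supp_eq_covered η cc
  rw [h] at h2
  exact_mod_cast h2

/-- The canonical partition associated to a matching. -/
def canonP (n : ℕ) (η : PM n) : Finset (Finset (Fin n)) :=
  Finset.univ.filter fun B => B.Nonempty ∧
    ∃ cc : (matchGraph η (idPM n)).ConnectedComponent, cc.supp = ↑(covered n B)

lemma mem_canonP {η : PM n} {B : Finset (Fin n)} :
    B ∈ canonP n η ↔ B.Nonempty ∧
      ∃ cc : (matchGraph η (idPM n)).ConnectedComponent, cc.supp = ↑(covered n B) := by
  simp [canonP]

end UniformMatchingAux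

namespace UniformMatchingAux

variable {n : ℕ}

lemma blockOf_mem_canonP (η : PM n) (cc : (matchGraph η (idPM n)).ConnectedComponent) :
    blockOf η cc ∈ canonP n η := by
  rw [mem_canonP]
  refine ⟨?_, cc, supp_eq_covered η cc⟩
  obtain ⟨v, hv⟩ := cc.exists_rep
  have hvs : v ∈ cc.supp := by
    rw [SimpleGraph.ConnectedComponent.mem_supp_iff, ← hv]; rfl
  have : (v.1, false) ∈ cc.supp := (mem_supp_iff_false η cc v).mp hvs
  exact ⟨v.1, Finset.mem_filter.mpr ⟨Finset.mem_univ _, this⟩⟩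

lemma supp_natCard (η : PM n) (cc : (matchGraph η (idPM n)).ConnectedComponent) :
    Nat.card cc.supp = 2 * (blockOf η cc).card := by
  rw [supp_eq_covered η cc, Nat.card_coe_set_eq, Set.ncard_coe_finset, covered_card]

lemma canonP_partition (η : PM n) (i : Fin n) :
    ∃! B, B ∈ canonP n η ∧ i ∈ B := by
  set cc := (matchGraph η (idPM n)).connectedComponentMk (i, false) with hcc
  refine ⟨blockOf η cc, ⟨blockOf_mem_canonP η cc, ?_⟩, ?_⟩
  · simp only [blockOf, Finset.mem_filter, Finset.mem_univ, true_and]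
    rw [SimpleGraph.ConnectedComponent.mem_supp_iff]
  · rintro B' ⟨hB', hiB'⟩
    rw [mem_canonP] at hB'
    obtain ⟨-, cc', hsupp⟩ := hB'
    have h1 : (i, false) ∈ cc'.supp := by
      rw [hsupp]; exact_mod_cast mem_covered.mpr hiB'
    rw [SimpleGraph.ConnectedComponent.mem_supp_iff] at h1
    rw [eq_blockOf hsupp, ← h1]

lemma canonP_count (η : PM n) (ℓ : ℕ) :
    ((canonP n η).filter fun B => B.card = ℓ).card = cycleCount η (idPM n) ℓ := by
  classical
  have h1 : cycleCount η (idPM n) ℓ =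
      (Finset.univ.filter fun cc : (matchGraph η (idPM n)).ConnectedComponent =>
        Nat.card cc.supp = 2 * ℓ).card := by
    rw [cycleCount, Nat.card_eq_fintype_card, Fintype.card_subtype]
  rw [h1]
  symm
  apply Finset.card_bij (fun cc _ => blockOf η cc)
  · intro cc hcc
    simp only [Finset.mem_filter, Finset.mem_univ, true_and] at hcc ⊢
    refine ⟨blockOf_mem_canonP η cc, ?_⟩
    have := supp_natCard η cc
    omega
  · intro cc _ cc' _ h
    apply SimpleGraph.ConnectedComponent.supp_injective
    rw [supp_eq_covered η cc, supp_eq_covered η cc', h]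
  · intro B hB
    simp only [Finset.mem_filter, Finset.mem_univ, true_and] at hB
    obtain ⟨hBc, hcard⟩ := hB
    rw [mem_canonP] at hBc
    obtain ⟨-, cc, hsupp⟩ := hBc
    refine ⟨cc, ?_, (eq_blockOf hsupp).symm⟩
    simp only [Finset.mem_filter, Finset.mem_univ, true_and]
    rw [hsupp, Nat.card_coe_set_eq, Set.ncard_coe_finset, covered_card, hcard]

lemma P_eq_canonP {η : PM n} {P : Finset (Finset (Fin n))}
    (hne : ∀ B ∈ P, B.Nonempty) (hpart : ∀ i : Fin n, ∃! B, B ∈ P ∧ i ∈ B)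
    (hcomp : CompatPH n P η) : P = canonP n η := by
  ext B
  constructor
  · intro hB
    rw [mem_canonP]
    exact ⟨hne B hB, hcomp B hB⟩
  · intro hB
    rw [mem_canonP] at hB
    obtain ⟨⟨i, hi⟩, cc, hsupp⟩ := hB
    obtain ⟨B', ⟨hB'P, hiB'⟩, -⟩ := hpart i
    obtain ⟨cc', hsupp'⟩ := hcomp B' hB'P
    have h1 : (i, false) ∈ cc.supp := by
      rw [hsupp]; exact_mod_cast mem_covered.mpr hi
    have h2 : (i, false) ∈ cc'.supp := by
      rw [hsupp']; exact_mod_cast mem_covered.mpr hiB'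
    rw [SimpleGraph.ConnectedComponent.mem_supp_iff] at h1 h2
    have : cc = cc' := h1.symm.trans h2
    subst this
    have : B = B' := by
      rw [eq_blockOf hsupp, eq_blockOf hsupp']
    rwa [this]

lemma mem_Mc {c : ℕ → ℕ} {η : PM n} :
    η ∈ Mc n c ↔ ∀ ℓ, 1 ≤ ℓ → cycleCount η (idPM n) ℓ = c ℓ := by simp [Mc]

lemma sample_char {c : ℕ → ℕ} {P : Finset (Finset (Fin n))} {η : PM n}
    (h : (P, η) ∈ sampleSpacePM n c) : P = canonP n η ∧ η ∈ Mc n c := by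
  rw [sampleSpacePM, Finset.mem_filter] at h
  obtain ⟨-, ⟨h1, h2, h3⟩, h4⟩ := h
  have hP : P = canonP n η := P_eq_canonP h1 h2 h4
  refine ⟨hP, mem_Mc.mpr fun ℓ hℓ => ?_⟩
  rw [← canonP_count η ℓ, ← hP]
  exact h3 ℓ hℓ

lemma canonP_mem_sample {c : ℕ → ℕ} {η : PM n} (h : η ∈ Mc n c) :
    (canonP n η, η) ∈ sampleSpacePM n c := by
  rw [sampleSpacePM, Finset.mem_filter]
  refine ⟨Finset.mem_univ _, ⟨?_, ?_, ?_⟩, ?_⟩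
  · intro B hB; exact (mem_canonP.mp hB).1
  · exact canonP_partition η
  · intro ℓ hℓ
    rw [canonP_count η ℓ]
    exact mem_Mc.mp h ℓ hℓ
  · intro B hB
    exact (mem_canonP.mp hB).2

end UniformMatchingAux

/-- the matching `H` produced by sampling a uniform partition of the pairs
of type `c` and independent uniform single cycles on its blocks is uniform on `M(c)`. -/
theorem uniform_matching_via_cycle_decomposition (n : ℕ) (c : ℕ → ℕ)
    (hc : ∑ ℓ ∈ Finset.Icc 1 n, ℓ * c ℓ = n) (hc0 : ∀ ℓ, n < ℓ → c ℓ = 0) :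
    ∀ η : PM n,
      (((sampleSpacePM n c).filter fun PH => PH.2 = η).card : ℝ)
          / ((sampleSpacePM n c).card : ℝ)
        = if η ∈ Mc n c then ((Mc n c).card : ℝ)⁻¹ else 0 := by
  intro η
  have key : ((sampleSpacePM n c).filter fun PH => PH.2 = η)
      = if η ∈ Mc n c then {(UniformMatchingAux.canonP n η, η)} else ∅ := by
    split_ifs with h
    · ext PH
      obtain ⟨P, H⟩ := PH
      simp only [Finset.mem_filter, Finset.mem_singleton]
      constructor
      · rintro ⟨hmem, h2⟩
        cases h2
        obtain ⟨hP, -⟩ := UniformMatchingAux.sample_char hmem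
        rw [hP]
      · rintro h2
        rw [Prod.ext_iff] at h2
        obtain ⟨h2a, h2b⟩ := h2
        cases h2a; cases h2b
        exact ⟨UniformMatchingAux.canonP_mem_sample h, rfl⟩
    · ext PH
      obtain ⟨P, H⟩ := PH
      simp only [Finset.mem_filter, Finset.notMem_empty, iff_false, not_and]
      intro hmem h2
      cases h2
      exact h (UniformMatchingAux.sample_char hmem).2
  have hcard : (sampleSpacePM n c).card = (Mc n c).card := by
    apply Finset.card_bij (fun PH _ => PH.2)
    · rintro ⟨P, H⟩ hPH
      exact (UniformMatchingAux.sample_char hPH).2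
    · rintro ⟨P, H⟩ hPH ⟨P', H'⟩ hPH' hEq
      simp only at hEq
      cases hEq
      have h1 := (UniformMatchingAux.sample_char hPH).1
      have h2 := (UniformMatchingAux.sample_char hPH').1
      rw [h1, h2]
    · intro η' hη'
      exact ⟨(UniformMatchingAux.canonP n η', η'),
        UniformMatchingAux.canonP_mem_sample hη', rfl⟩
  rw [key, hcard]
  split_ifs with h
  · rw [Finset.card_singleton]
    rw [Nat.cast_one, one_div]
  · simp


end
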